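/- arXiv:1103.5862 — 2 statements merged into one kernel-verified Lean document; each statement's English description precedes it below -/
import Mathlib

section
/- Let A be an almost Kähler–Poisson algebra. Then for all u ∈ A it holds that [D^i, D^j](u) P_{ik} P_{jl} = 0, i.e. D^i D^j(u) P_{ik} P_{jl} = D^j D^i(u) P_{ik} P_{jl}. -/
open scoped BigOperators

namespace KPA

/-- The field of fractions of the polynomial ring `ℂ[x¹,…,xᵐ]`. -/
abbrev A (m : ℕ) := FractionRing (MvPolynomial (Fin m) ℂ)

/-- The generators `x^i` of `A m`. -/
noncomputable def Xg {m : ℕ} (i : Fin m) : A m :=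
  algebraMap (MvPolynomial (Fin m) ℂ) (A m) (MvPolynomial.X i)

/-- The image of a complex constant in `A m`. -/
noncomputable def cC {m : ℕ} (z : ℂ) : A m :=
  algebraMap (MvPolynomial (Fin m) ℂ) (A m) (MvPolynomial.C z)

/-- An almost Kähler–Poisson algebra: the field of fractions `A m` of `ℂ[x¹,…,xᵐ]`,
equipped with a ∗-structure `st` fixing the generators, a Poisson bracket `br`
compatible with ∗, and an invertible hermitian element `γ2` such that
`P^i_k P^k_l P^l_j = -γ² P^i_j` where `P^{ij} = {x^i, x^j}`. -/
structure AKP (m : ℕ) where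
  br : A m → A m → A m
  st : A m → A m
  br_add_left : ∀ a b c, br (a + b) c = br a c + br b c
  br_antisymm : ∀ a b, br a b = - br b a
  br_leibniz : ∀ a b c, br a (b * c) = br a b * c + b * br a c
  br_jacobi : ∀ a b c, br a (br b c) + br b (br c a) + br c (br a b) = 0
  br_const : ∀ (z : ℂ) (a : A m), br (cC z) a = 0
  st_add : ∀ a b, st (a + b) = st a + st b
  st_mul : ∀ a b, st (a * b) = st a * st b
  st_invol : ∀ a, st (st a) = a
  st_const : ∀ z : ℂ, st (cC z) = cC (starRingEnd ℂ z)
  st_x : ∀ i, st (Xg i) = Xg i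
  st_br : ∀ a b, st (br a b) = br (st a) (st b)
  γ2 : A m
  γ2_ne : γ2 ≠ 0
  γ2_herm : st γ2 = γ2
  akp : ∀ i j, (∑ k, ∑ l, br (Xg i) (Xg k) * br (Xg k) (Xg l) * br (Xg l) (Xg j))
      = - γ2 * br (Xg i) (Xg j)

namespace AKP

variable {m : ℕ} (S : AKP m)

/-- `P^{ij} = {x^i, x^j}`. -/
noncomputable def P (i j : Fin m) : A m := S.br (Xg i) (Xg j)

/-- `D^i(u) = γ^{-2} {u, x^k} P^i_k`. -/
noncomputable def D (u : A m) (i : Fin m) : A m := S.γ2⁻¹ * ∑ k, S.br u (Xg k) * S.P i k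

/-- `D^{ik} = D^i(x^k)`. -/
noncomputable def Dm (i k : Fin m) : A m := S.D (Xg k) i

/-- Membership in the tangent space `X(A) = {D(X) : X ∈ Der(A)}` (in components). -/
def tang (T : Fin m → A m) : Prop := ∃ V : Fin m → A m, ∀ i, T i = ∑ k, S.Dm i k * V k

/-- The tangent space `X(A)` as a submodule of `A^m` : the range of the projection `D`. -/
noncomputable def tSp : Submodule (A m) (Fin m → A m) :=
  LinearMap.range (Matrix.mulVecLin (Matrix.of fun i k => S.Dm i k))

/-- Action `X(u) = X^i D_i(u)` of a tangent vector on an element. -/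
noncomputable def act (X : Fin m → A m) (u : A m) : A m := ∑ i, X i * S.D u i

/-- The covariant derivative `∇_X Y = D^{ik} X^l D_l(Y_k) ∂_i` (in components). -/
noncomputable def nab (X Y : Fin m → A m) (i : Fin m) : A m :=
  ∑ k, S.Dm i k * ∑ l, X l * S.D (Y k) l

/-- The commutator `[X,Y]^i = X(Y^i) - Y(X^i)`. -/
noncomputable def lie (X Y : Fin m → A m) (i : Fin m) : A m := S.act X (Y i) - S.act Y (X i)

/-- The curvature `R(X,Y)Z = ∇_X ∇_Y Z - ∇_Y ∇_X Z - ∇_{[X,Y]} Z`. -/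
noncomputable def curv (X Y Z : Fin m → A m) (i : Fin m) : A m :=
  S.nab X (S.nab Y Z) i - S.nab Y (S.nab X Z) i - S.nab (S.lie X Y) Z i

/-- The bilinear form `(X,Y) = X^i Y_i`. -/
noncomputable def ipa (_S : AKP m) (X Y : Fin m → A m) : A m := ∑ i, X i * Y i

/-- `R(X,Y,Z,V) = (R(Z,V)Y, X)`. -/
noncomputable def Rq (X Y Z V : Fin m → A m) : A m := S.ipa (S.curv Z V Y) X

/-- `(∇_X R)(Y,Z,V)`, the covariant derivative of the curvature tensor. -/
noncomputable def nabR (X Y Z V : Fin m → A m) (i : Fin m) : A m :=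
  S.nab X (S.curv Y Z V) i - S.curv (S.nab X Y) Z V i
    - S.curv Y (S.nab X Z) V i - S.curv Y Z (S.nab X V) i

/-- `Π^{ij} = δ^{ij} - D^{ij}`. -/
noncomputable def Pim (i j : Fin m) : A m := (if i = j then 1 else 0) - S.Dm i j

/-- The positivity preorder: `a ≥ 0` iff `a = (∑ uᵢ* uᵢ)/(∑ vₖ* vₖ)`. -/
def pos (a : A m) : Prop :=
  ∃ (N N' : ℕ) (u : Fin N → A m) (v : Fin N' → A m),
    a = (∑ i, S.st (u i) * u i) / (∑ k, S.st (v k) * v k)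

end AKP
end KPA

/-!
The maps `a ↦ {a, y}`, and hence the `D^i`, are derivations of `A`, and a derivation of the
fraction field is determined by its values on the generators `x^j`. On generators the almost
Kähler identity `P³ = -γ² P` gives `D^i(v) P_{ik} = {v, x^k}`, and from this
`{u, f} = D^j(u) {x^j, f}` for all `f`. Contracting with `P` turns `D^i D^j(u) P_{ik} P_{jl}`
into `{D^j u, x^k} P_{jl}`; after Leibniz and Jacobi the antisymmetrised expression becomes
`{u, P^{lk}} - D^j(u) {x^j, P^{lk}}`, which vanishes by the second identity.
-/

theorem Derivation.ext_of_isFractionRing {k R K : Type*} [CommRing k] [CommRing R] [Field K]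
    [Algebra k K] [Algebra R K] [IsFractionRing R K] {d₁ d₂ : Derivation k K K}
    (h : ∀ r, d₁ (algebraMap R K r) = d₂ (algebraMap R K r)) : d₁ = d₂ := by
  ext a
  obtain ⟨x, y, -, rfl⟩ := IsFractionRing.div_surjective (A := R) a
  rw [Derivation.leibniz_div, Derivation.leibniz_div, h, h]

theorem Derivation.sum_apply {R A M ι : Type*} [CommSemiring R] [CommSemiring A]
    [AddCommMonoid M] [Algebra R A] [Module A M] [Module R M] (s : Finset ι)
    (d : ι → Derivation R A M) (a : A) : (∑ i ∈ s, d i) a = ∑ i ∈ s, d i a := by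
  simp only [← Derivation.coeFnAddMonoidHom_apply, map_sum, Finset.sum_apply]

namespace KPA

variable {m : ℕ}

theorem cC_eq_algebraMap (z : ℂ) : (cC z : A m) = algebraMap ℂ (A m) z :=
  (IsScalarTower.algebraMap_apply ℂ (MvPolynomial (Fin m) ℂ) (A m) z).symm

theorem derivation_ext_Xg {d₁ d₂ : Derivation ℂ (A m) (A m)}
    (h : ∀ i, d₁ (Xg i) = d₂ (Xg i)) : d₁ = d₂ := by
  refine Derivation.ext_of_isFractionRing (R := MvPolynomial (Fin m) ℂ) fun p => ?_
  have hpoly : d₁.compAlgebraMap (MvPolynomial (Fin m) ℂ) =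
      d₂.compAlgebraMap (MvPolynomial (Fin m) ℂ) :=
    MvPolynomial.derivation_ext h
  exact congr($hpoly p)

namespace AKP

variable (S : AKP m)

theorem br_mul_left (a b c : A m) : S.br (a * b) c = S.br a c * b + a * S.br b c := by
  rw [S.br_antisymm (a * b) c, S.br_leibniz, S.br_antisymm c a, S.br_antisymm c b]
  ring

noncomputable def brLeft (y : A m) : Derivation ℂ (A m) (A m) :=
  Derivation.mk'
    { toFun := fun a => S.br a y
      map_add' := fun a b => S.br_add_left a b y
      map_smul' := fun z a => by
        simp [Algebra.smul_def, ← cC_eq_algebraMap, br_mul_left, S.br_const] }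
    fun a b => by simp [br_mul_left, mul_comm, add_comm]

@[simp]
theorem brLeft_apply (y a : A m) : S.brLeft y a = S.br a y := rfl

theorem br_neg_right (a b : A m) : S.br a (-b) = -S.br a b := by
  rw [S.br_antisymm, ← brLeft_apply, map_neg, brLeft_apply, ← S.br_antisymm]

theorem br_br_sub_br_br (a b c : A m) :
    S.br (S.br a b) c - S.br (S.br a c) b = S.br a (S.br b c) := by
  have hj := S.br_jacobi a b c
  rw [S.br_antisymm c a, br_neg_right] at hj
  rw [S.br_antisymm (S.br a b) c, S.br_antisymm (S.br a c) b]
  linear_combination -hj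

noncomputable def derivD (i : Fin m) : Derivation ℂ (A m) (A m) :=
  S.γ2⁻¹ • ∑ k, S.P i k • S.brLeft (Xg k)

theorem derivD_apply (i : Fin m) (u : A m) : S.derivD i u = S.D u i := by
  simp [derivD, D, Derivation.sum_apply, mul_comm]

theorem sum_P_mul_P_mul_P (i j : Fin m) :
    ∑ k, ∑ l, S.P i k * S.P k l * S.P l j = -S.γ2 * S.P i j :=
  S.akp i j

theorem sum_D_Xg_mul_P (j k : Fin m) : ∑ i, S.D (Xg j) i * S.P i k = S.P j k := by
  calc ∑ i, S.D (Xg j) i * S.P i k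
      = -S.γ2⁻¹ * ∑ a, ∑ i, S.P j a * S.P a i * S.P i k := by
        simp only [D, Finset.mul_sum, Finset.sum_mul]
        rw [Finset.sum_comm]
        refine Finset.sum_congr rfl fun a _ => Finset.sum_congr rfl fun i _ => ?_
        rw [show S.P i a = -S.P a i from S.br_antisymm _ _]
        simp only [P]
        ring
    _ = S.P j k := by
        rw [S.sum_P_mul_P_mul_P]
        field_simp [S.γ2_ne]

theorem sum_D_mul_P (v : A m) (k : Fin m) : ∑ i, S.D v i * S.P i k = S.br v (Xg k) := by
  have h : ∑ i, S.P i k • S.derivD i = S.brLeft (Xg k) :=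
    derivation_ext_Xg fun j => by
      simpa [Derivation.sum_apply, derivD_apply, mul_comm, P] using S.sum_D_Xg_mul_P j k
  simpa [Derivation.sum_apply, derivD_apply, mul_comm] using congr($h v)

theorem br_eq_sum_D_mul_br (u f : A m) : S.br u f = ∑ j, S.D u j * S.br (Xg j) f := by
  have h : S.brLeft u = ∑ j, S.D u j • S.brLeft (Xg j) :=
    derivation_ext_Xg fun k => by
      simp only [brLeft_apply, Derivation.sum_apply, Derivation.smul_apply, smul_eq_mul]
      rw [S.br_antisymm, ← S.sum_D_mul_P, ← Finset.sum_neg_distrib]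
      refine Finset.sum_congr rfl fun i _ => ?_
      rw [P, S.br_antisymm (Xg i), mul_neg, neg_neg]
  have := congr($h f)
  simp only [brLeft_apply, Derivation.sum_apply, Derivation.smul_apply, smul_eq_mul] at this
  rw [S.br_antisymm, this, ← Finset.sum_neg_distrib]
  refine Finset.sum_congr rfl fun j _ => ?_
  rw [S.br_antisymm f, mul_neg, neg_neg]

theorem sum_br_D_mul_P (u : A m) (k l : Fin m) :
    ∑ j, S.br (S.D u j) (Xg k) * S.P j l =
      S.br (S.br u (Xg l)) (Xg k) - ∑ j, S.D u j * S.br (S.P j l) (Xg k) := by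
  rw [← S.sum_D_mul_P u l, ← brLeft_apply, map_sum]
  simp only [Derivation.leibniz, brLeft_apply, smul_eq_mul]
  rw [Finset.sum_add_distrib, add_sub_cancel_left]
  simp only [mul_comm]

end AKP
end KPA

/-- In an almost Kähler–Poisson algebra it holds for all `u ∈ A` that
`[D^i, D^j](u) P_{ik} P_{jl} = 0`. -/
theorem statement_12 {m : ℕ} (S : KPA.AKP m) (u : KPA.A m) (k l : Fin m) :
    ∑ i, ∑ j, (S.D (S.D u j) i - S.D (S.D u i) j) * S.P i k * S.P j l = 0 := by
  open KPA AKP in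
  calc ∑ i, ∑ j, (S.D (S.D u j) i - S.D (S.D u i) j) * S.P i k * S.P j l
      = ∑ j, S.br (S.D u j) (Xg k) * S.P j l - ∑ i, S.br (S.D u i) (Xg l) * S.P i k := by
        simp only [sub_mul, Finset.sum_sub_distrib]
        congr 1
        · rw [Finset.sum_comm]
          simp only [← S.sum_D_mul_P, Finset.sum_mul]
        · simp only [← S.sum_D_mul_P, Finset.sum_mul]
          exact Finset.sum_congr rfl fun i _ => Finset.sum_congr rfl fun j _ => by ring
    _ = (S.br (S.br u (Xg l)) (Xg k) - S.br (S.br u (Xg k)) (Xg l))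
          - ∑ j, S.D u j * (S.br (S.P j l) (Xg k) - S.br (S.P j k) (Xg l)) := by
        simp only [sum_br_D_mul_P, mul_sub, Finset.sum_sub_distrib]
        ring
    _ = S.br u (S.P l k) - ∑ j, S.D u j * S.br (Xg j) (S.P l k) := by
        simp only [P, br_br_sub_br_br]
    _ = 0 := by rw [← br_eq_sum_D_mul_br, sub_self]
end

section
/- Let A be an almost Kähler–Poisson algebra with tangent space X(A), covariant derivative ∇ and bilinear form (X,Y) = X^i Y_i. Then ∇ is a metric connection: ∇_X(Y,Z) − (∇_X Y, Z) − (Y, ∇_X Z) = 0 for all X, Y, Z ∈ X(A). -/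
open scoped BigOperators

/-! `D^{ik} = -γ⁻² (P²)^{ik}` is symmetric, and the cubic relation `P³ = -γ² P` makes it idempotent,
so it is the orthogonal projection onto the tangent space. The covariant derivative is `D`
applied to the componentwise derivative `X(Y^k)`, a derivation; pairing with a tangent vector
absorbs the projection, and the Leibniz rule for `X` gives metric compatibility. -/

namespace Matrix

theorem mulVec_dotProduct_of_mem_range {n R : Type*} [Fintype n] [CommRing R]
    {M : Matrix n n R} (hsymm : M.IsSymm) (hidem : IsIdempotentElem M) (v : n → R) {w : n → R}
    (hw : ∃ u, w = M *ᵥ u) : M *ᵥ v ⬝ᵥ w = v ⬝ᵥ w := by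
  obtain ⟨u, rfl⟩ := hw
  have hfix : M *ᵥ (M *ᵥ u) = M *ᵥ u := by rw [mulVec_mulVec, hidem.eq]
  rw [dotProduct_comm, dotProduct_mulVec, ← hsymm.eq, vecMul_transpose, hsymm.eq, hfix,
    dotProduct_comm]

end Matrix

namespace KPA.AKP

open Matrix

variable {m : ℕ} (S : AKP m)

noncomputable def Pmat : Matrix (Fin m) (Fin m) (A m) := Matrix.of S.P

noncomputable def Dmat : Matrix (Fin m) (Fin m) (A m) := Matrix.of S.Dm

theorem Pmat_transpose : S.Pmatᵀ = -S.Pmat := by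
  ext i j
  exact S.br_antisymm _ _

theorem Pmat_cube : S.Pmat * S.Pmat * S.Pmat = -S.γ2 • S.Pmat := by
  ext i j
  simp only [Matrix.mul_apply, Matrix.smul_apply, Pmat, Matrix.of_apply, Finset.sum_mul,
    smul_eq_mul]
  rw [Finset.sum_comm]
  exact S.akp i j

theorem Dmat_eq_smul_mul_transpose : S.Dmat = S.γ2⁻¹ • (S.Pmat * S.Pmatᵀ) := by
  ext i k
  simp only [Dmat, Dm, D, Matrix.smul_apply, Matrix.mul_apply, Matrix.transpose_apply, Pmat,
    Matrix.of_apply, smul_eq_mul]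
  congr 1
  exact Finset.sum_congr rfl fun l _ => mul_comm _ _

theorem isSymm_Dmat : S.Dmat.IsSymm := by
  rw [Dmat_eq_smul_mul_transpose]
  exact (isSymm_mul_transpose_self _).smul _

theorem isIdempotentElem_Dmat : IsIdempotentElem S.Dmat := by
  have hγ : S.γ2⁻¹ * S.γ2 = 1 := inv_mul_cancel₀ S.γ2_ne
  have hP4 : S.Pmat * S.Pmat * (S.Pmat * S.Pmat) = -S.γ2 • (S.Pmat * S.Pmat) := by
    rw [← Matrix.mul_assoc, Pmat_cube, Matrix.smul_mul]
  have hD : S.Dmat = -S.γ2⁻¹ • (S.Pmat * S.Pmat) := by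
    rw [Dmat_eq_smul_mul_transpose, Pmat_transpose, Matrix.mul_neg, smul_neg, neg_smul]
  rw [IsIdempotentElem, hD, Matrix.smul_mul, Matrix.mul_smul, hP4, smul_smul, smul_smul]
  congr 1
  linear_combination -S.γ2⁻¹ * hγ

theorem tang_iff (T : Fin m → A m) : S.tang T ↔ ∃ V, T = S.Dmat *ᵥ V := by
  simp only [tang, funext_iff]
  rfl

theorem nab_eq_mulVec (X Y : Fin m → A m) : S.nab X Y = S.Dmat *ᵥ fun k => S.act X (Y k) := rfl

theorem ipa_eq_dotProduct (X Y : Fin m → A m) : S.ipa X Y = X ⬝ᵥ Y := rfl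

theorem D_add (u v : A m) (i : Fin m) : S.D (u + v) i = S.D u i + S.D v i := by
  simp only [D, S.br_add_left, add_mul, Finset.sum_add_distrib, mul_add]

theorem D_mul (u v : A m) (i : Fin m) : S.D (u * v) i = S.D u i * v + u * S.D v i := by
  have br_mul_left : ∀ k, S.br (u * v) (Xg k) = S.br u (Xg k) * v + u * S.br v (Xg k) := by
    intro k
    rw [S.br_antisymm, S.br_leibniz, S.br_antisymm (Xg k) u, S.br_antisymm (Xg k) v]
    ring
  simp only [D, br_mul_left, Finset.mul_sum, Finset.sum_mul, ← Finset.sum_add_distrib]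
  exact Finset.sum_congr rfl fun k _ => by ring

theorem act_add (X : Fin m → A m) (u v : A m) : S.act X (u + v) = S.act X u + S.act X v := by
  simp only [act, D_add, mul_add, Finset.sum_add_distrib]

theorem act_mul (X : Fin m → A m) (u v : A m) :
    S.act X (u * v) = S.act X u * v + u * S.act X v := by
  simp only [act, D_mul, Finset.sum_mul, Finset.mul_sum, ← Finset.sum_add_distrib]
  exact Finset.sum_congr rfl fun i _ => by ring

theorem act_sum (X : Fin m → A m) {ι : Type*} (s : Finset ι) (f : ι → A m) :
    S.act X (∑ j ∈ s, f j) = ∑ j ∈ s, S.act X (f j) :=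
  map_sum (AddMonoidHom.mk' (S.act X) (S.act_add X)) f s

theorem act_ipa (X Y Z : Fin m → A m) :
    S.act X (S.ipa Y Z) = S.ipa (fun k => S.act X (Y k)) Z + S.ipa Y (fun k => S.act X (Z k)) := by
  simp only [ipa, act_sum, act_mul, Finset.sum_add_distrib]

theorem ipa_comm (Y Z : Fin m → A m) : S.ipa Y Z = S.ipa Z Y := dotProduct_comm Y Z

theorem ipa_nab_left_of_tang (X Y : Fin m → A m) {Z : Fin m → A m} (hZ : S.tang Z) :
    S.ipa (S.nab X Y) Z = S.ipa (fun k => S.act X (Y k)) Z := by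
  rw [ipa_eq_dotProduct, nab_eq_mulVec]
  exact Matrix.mulVec_dotProduct_of_mem_range S.isSymm_Dmat S.isIdempotentElem_Dmat _
    ((S.tang_iff Z).1 hZ)

end KPA.AKP

theorem statement_14_general {m : ℕ} (S : KPA.AKP m) (X Y Z : Fin m → KPA.A m)
    (hY : S.tang Y) (hZ : S.tang Z) :
    S.act X (S.ipa Y Z) - S.ipa (S.nab X Y) Z - S.ipa Y (S.nab X Z) = 0 := by
  rw [S.act_ipa, S.ipa_nab_left_of_tang X Y hZ, S.ipa_comm Y (S.nab X Z),
    S.ipa_nab_left_of_tang X Z hY, S.ipa_comm _ Y]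
  abel

/-- The covariant derivative of an almost Kähler–Poisson algebra is a
metric connection: `∇_X(Y,Z) − (∇_X Y, Z) − (Y, ∇_X Z) = 0` for all `X,Y,Z ∈ X(A)`. -/
theorem statement_14 {m : ℕ} (S : KPA.AKP m) (X Y Z : Fin m → KPA.A m)
    (hX : S.tang X) (hY : S.tang Y) (hZ : S.tang Z) :
    S.act X (S.ipa Y Z) - S.ipa (S.nab X Y) Z - S.ipa Y (S.nab X Z) = 0 :=
  statement_14_general S X Y Z hY hZ
end
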